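/- Let p ∈ ℝ[x₁,…,xₙ] be a real zero polynomial, i.e., p(0) ≠ 0 and for every a ∈ ℝⁿ the univariate polynomial t ↦ p(ta) has only real roots (over ℂ). Let x₀ ∈ ℝⁿ be a point in the connected component of 0 in {x : p(x) ≠ 0}. Then the translated polynomial q(x) := p(x + x₀) is again a real zero polynomial, and the connected component of 0 in {x : q(x) ≠ 0} equals the translate by −x₀ of the connected component of 0 in {x : p(x) ≠ 0}. -/

import Mathlib

open MvPolynomial

/-- The restriction of `p` to the line through the origin with direction `a`,
as a univariate polynomial in `t`. -/
noncomputable def lineRestrict {n : ℕ} (p : MvPolynomial (Fin n) ℝ) (a : Fin n → ℝ) :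
    Polynomial ℝ :=
  MvPolynomial.aeval (fun i => Polynomial.C (a i) * Polynomial.X) p

/-- `p` is a real zero polynomial: `p(0) ≠ 0` and every complex root of every
line restriction through the origin is real. -/
def IsRealZero {n : ℕ} (p : MvPolynomial (Fin n) ℝ) : Prop :=
  MvPolynomial.eval 0 p ≠ 0 ∧
    ∀ a : Fin n → ℝ, ∀ z : ℂ, Polynomial.aeval z (lineRestrict p a) = 0 → z.im = 0

/-!
Call `p` real zero at `y` if `p y ≠ 0` and, for every real `v`, all complex roots of
`t ↦ p (y + t v)` are real. The translate `q` is real zero exactly when `p` is real zero at `x₀`,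
and the statement about components holds for any set, translation being a homeomorphism.

Being real zero propagates along segments `[x, y]` inside `{p ≠ 0}`, hence through the component
of `0` (the argument of Gårding and Renegar for hyperbolic polynomials). Fix a real direction `a`,
let `D` be the total degree of `p` and `pʰ` its degree-`D` homogenization, and consider for
`σ ∈ [0, 1]` the pencil `P_σ(z) = pʰ(i(1 - σ)·(1, x) + σ·(0, a) + z·(1, y))`. All `P_σ` have
degree `D` and leading coefficient `p y`. For `σ < 1` a real root of `P_σ` would be a zero of `p`
at a non-real point of a real line through `x`; at `σ = 0` every root lies in the open lower
half-plane because `p` does not vanish on `[x, y]`. By continuity of roots this persists for all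
`σ < 1`, so the roots of `P_1(z) = z ^ D p (y + a / z)` lie in the closed lower half-plane. Applied
to `a` and `-a`, this forces the roots of `t ↦ p (y + t a)` to be real.
-/

open Polynomial Filter Topology Metric Set Complex

namespace Polynomial

variable {K T : Type*} [NormedField K] [TopologicalSpace T] {F : T → K[X]} {D : ℕ}

theorem cauchyBound_le_add_one_of_norm_coeff_sub_lt_one {f g : K[X]} (hf : f.Monic)
    (hg : g.Monic) (hdeg : g.natDegree = f.natDegree) (hcoeff : ∀ k, ‖g.coeff k - f.coeff k‖ < 1) :
    (g.cauchyBound : ℝ) ≤ f.cauchyBound + 1 := by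
  have hsup : (Finset.range g.natDegree).sup (‖g.coeff ·‖₊) ≤
      (Finset.range f.natDegree).sup (‖f.coeff ·‖₊) + 1 := by
    refine Finset.sup_le fun k hk => ?_
    have hle : ‖g.coeff k‖ ≤ ‖f.coeff k‖ + 1 := by
      linarith [norm_le_insert' (g.coeff k) (f.coeff k), hcoeff k]
    have hk : ‖f.coeff k‖₊ ≤ (Finset.range f.natDegree).sup (‖f.coeff ·‖₊) :=
      Finset.le_sup (f := (‖f.coeff ·‖₊)) (hdeg ▸ hk)
    rw [← NNReal.coe_le_coe, coe_nnnorm] at hk ⊢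
    push_cast
    linarith
  simp only [cauchyBound, hf.leadingCoeff, hg.leadingCoeff, nnnorm_one, div_one]
  exact_mod_cast add_le_add_left hsup 1

theorem eventually_norm_coeff_sub_lt (hF : ∀ k, Continuous fun t => (F t).coeff k)
    (hdeg : ∀ t, (F t).natDegree = D) (t₀ : T) {ε : ℝ} (hε : 0 < ε) :
    ∀ᶠ t in 𝓝 t₀, ∀ k, ‖(F t).coeff k - (F t₀).coeff k‖ < ε := by
  have hlow : ∀ᶠ t in 𝓝 t₀, ∀ k ∈ Finset.range (D + 1),
      dist ((F t).coeff k) ((F t₀).coeff k) < ε :=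
    (eventually_all_finset _).2 fun k _ => (hF k).continuousAt.eventually (ball_mem_nhds _ hε)
  filter_upwards [hlow] with t ht k
  rcases lt_or_ge k (D + 1) with hk | hk
  · simpa [dist_eq_norm] using ht k (Finset.mem_range.2 hk)
  · rw [coeff_eq_zero_of_natDegree_lt (by rw [hdeg]; omega),
      coeff_eq_zero_of_natDegree_lt (by rw [hdeg]; omega), sub_zero, norm_zero]
    exact hε

variable [IsAlgClosed K]

theorem exists_pos_forall_exists_isRoot_near (N : ℕ) (M : ℝ) {r : ℝ} (hr : 0 < r) :
    ∃ ε > 0, ∀ f g : K[X], f.Monic → g.Monic → f.natDegree = N → g.natDegree = N →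
      (∀ k, ‖g.coeff k - f.coeff k‖ < ε) →
      ∀ a, ‖a‖ ≤ M → f.IsRoot a → ∃ b, g.IsRoot b ∧ ‖a - b‖ < r := by
  rcases Nat.eq_zero_or_pos N with rfl | hN
  · refine ⟨1, one_pos, fun f g hf _ hfN _ _ a _ ha => ?_⟩
    simp [hf.natDegree_eq_zero.mp hfN] at ha
  set B := max M 1
  have hB : 0 < B := lt_max_of_lt_right one_pos
  refine ⟨(r / (2 * B)) ^ N / (N + 1), by positivity,
    fun f g hf hg hfN hgN hcoeff a ha hroot => ?_⟩
  obtain ⟨b, hb, hab⟩ := exists_roots_norm_sub_lt_of_norm_coeff_sub_lt (by positivity) hroot hf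
    hg (hgN.trans hfN.symm) hcoeff (IsAlgClosed.splits g)
  refine ⟨b, (mem_roots hg.ne_zero).1 hb, hab.trans_le ?_⟩
  rw [hfN, mul_div_cancel₀ _ (by positivity), Real.pow_rpow_inv_natCast (by positivity) hN.ne']
  calc r / (2 * B) * max ‖a‖ 1 ≤ r / (2 * B) * B := by gcongr; exact max_le_max_right 1 ha
    _ ≤ r := by field_simp; linarith

section ContinuousFamily

variable (hmon : ∀ t, (F t).Monic) (hF : ∀ k, Continuous fun t => (F t).coeff k)
  (hdeg : ∀ t, (F t).natDegree = D)
include hmon hF hdeg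

theorem isOpen_setOf_exists_isRoot_mem {U : Set K} (hU : IsOpen U) :
    IsOpen {t | ∃ z ∈ U, (F t).IsRoot z} := by
  refine isOpen_iff_mem_nhds.2 fun t₀ ⟨z₀, hz₀U, hz₀⟩ => ?_
  obtain ⟨r, hr, hball⟩ := Metric.isOpen_iff.1 hU z₀ hz₀U
  obtain ⟨ε, hε, hnear⟩ := exists_pos_forall_exists_isRoot_near (K := K) D ‖z₀‖ hr
  filter_upwards [eventually_norm_coeff_sub_lt hF hdeg t₀ hε] with t ht
  obtain ⟨b, hb, hzb⟩ := hnear _ _ (hmon t₀) (hmon t) (hdeg t₀) (hdeg t) ht z₀ le_rfl hz₀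
  exact ⟨b, hball (by rwa [mem_ball, dist_comm, dist_eq_norm]), hb⟩

theorem isOpen_setOf_forall_isRoot_mem {U : Set K} (hU : IsOpen U) :
    IsOpen {t | ∀ z, (F t).IsRoot z → z ∈ U} := by
  refine isOpen_iff_mem_nhds.2 fun t₀ ht₀ => ?_
  have hfin : {z | (F t₀).IsRoot z}.Finite := finite_setOfPred_isRoot (hmon t₀).ne_zero
  obtain ⟨δ, hδ, hthick⟩ := hfin.isCompact.exists_thickening_subset_open hU ht₀
  obtain ⟨ε, hε, hnear⟩ :=
    exists_pos_forall_exists_isRoot_near (K := K) D ((F t₀).cauchyBound + 1) hδ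
  filter_upwards [eventually_norm_coeff_sub_lt hF hdeg t₀ (lt_min hε one_pos)] with t ht a ha
  have hbound : ‖a‖ ≤ (F t₀).cauchyBound + 1 :=
    (show ‖a‖ < (F t).cauchyBound by
      simpa using NNReal.coe_lt_coe.2 (ha.norm_lt_cauchyBound (hmon t).ne_zero)).le.trans
      (cauchyBound_le_add_one_of_norm_coeff_sub_lt_one (hmon t₀) (hmon t)
        ((hdeg t).trans (hdeg t₀).symm) fun k => (ht k).trans_le (min_le_right _ _))
  obtain ⟨b, hb, hab⟩ := hnear _ _ (hmon t) (hmon t₀) (hdeg t) (hdeg t₀)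
    (fun k => by rw [norm_sub_rev]; exact (ht k).trans_le (min_le_left _ _)) a hbound ha
  exact hthick (mem_thickening_iff.2 ⟨b, hb, by rwa [dist_eq_norm]⟩)

theorem _root_.IsPreconnected.forall_isRoot_mem {S : Set T} (hS : IsPreconnected S)
    {U V : Set K} (hU : IsOpen U) (hV : IsOpen V) (hUV : Disjoint U V)
    (hSUV : ∀ t ∈ S, ∀ z, (F t).IsRoot z → z ∈ U ∪ V) {t₀ : T} (ht₀ : t₀ ∈ S)
    (h₀ : ∀ z, (F t₀).IsRoot z → z ∈ U) : ∀ t ∈ S, ∀ z, (F t).IsRoot z → z ∈ U := by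
  have hdisj : Disjoint {t | ∀ z, (F t).IsRoot z → z ∈ U} {t | ∃ z ∈ V, (F t).IsRoot z} :=
    Set.disjoint_left.2 fun t hA ⟨z, hzV, hz⟩ => hUV.ne_of_mem (hA z hz) hzV rfl
  refine fun t ht => hS.subset_left_of_subset_union
    (isOpen_setOf_forall_isRoot_mem hmon hF hdeg hU)
    (isOpen_setOf_exists_isRoot_mem hmon hF hdeg hV) hdisj (fun t ht => ?_) ⟨t₀, ht₀, h₀⟩ ht
  by_cases h : ∃ z ∈ V, (F t).IsRoot z
  · exact Or.inr h
  · push Not at h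
    exact Or.inl fun z hz => (hSUV t ht z hz).resolve_right (h z · hz)

theorem forall_isRoot_mem_of_mem_closure {S : Set T} {C : Set K} (hC : IsClosed C)
    (hS : ∀ t ∈ S, ∀ z, (F t).IsRoot z → z ∈ C) {t : T} (ht : t ∈ closure S) :
    ∀ z, (F t).IsRoot z → z ∈ C := by
  by_contra! ⟨z, hz, hzC⟩
  obtain ⟨s, ⟨z, hzC, hz⟩, hs⟩ := mem_closure_iff.1 ht _
    (isOpen_setOf_exists_isRoot_mem hmon hF hdeg hC.isOpen_compl) ⟨z, hzC, hz⟩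
  exact hzC (hS s hs z hz)

end ContinuousFamily

end Polynomial

theorem IsOpen.induction_on_connectedComponentIn {E : Type*} [NormedAddCommGroup E]
    [NormedSpace ℝ E] {S : Set E} (hS : IsOpen S) {P : E → Prop}
    (hP : ∀ x y, segment ℝ x y ⊆ S → P x → P y) {x y : E} (hx : P x)
    (hy : y ∈ connectedComponentIn S x) : P y := by
  classical
  have hlocal : ∀ z ∈ S, ∀ᶠ w in 𝓝 z, (P z ↔ P w) := fun z hz => by
    obtain ⟨r, hr, hball⟩ := Metric.isOpen_iff.1 hS z hz
    filter_upwards [ball_mem_nhds z hr] with w hw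
    have hseg : ∀ {u v}, u ∈ ball z r → v ∈ ball z r → segment ℝ u v ⊆ S :=
      fun hu hv => ((convex_ball z r).segment_subset hu hv).trans hball
    exact ⟨hP z w (hseg (mem_ball_self hr) hw), hP w z (hseg hw (mem_ball_self hr))⟩
  have hcont : ContinuousOn (fun z => decide (P z)) S := fun z hz =>
    ((continuousAt_const (y := decide (P z))).congr
      ((hlocal z hz).mono fun _ hw => decide_eq_decide.2 hw)).continuousWithinAt
  have hxS : x ∈ S := connectedComponentIn_nonempty_iff.1 ⟨y, hy⟩
  have := isPreconnected_connectedComponentIn.constant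
    (hcont.mono (connectedComponentIn_subset S x)) (mem_connectedComponentIn hxS) hy
  simpa [hx] using this

theorem connectedComponentIn_preimage_add_right {G : Type*} [TopologicalSpace G] [AddGroup G]
    [IsTopologicalAddGroup G] {S : Set G} {x₀ : G} (hx₀ : x₀ ∈ connectedComponentIn S 0) :
    connectedComponentIn ((· + x₀) ⁻¹' S) 0 = (· - x₀) '' connectedComponentIn S 0 := by
  have h := (Homeomorph.addRight x₀).symm.image_connectedComponentIn
    (connectedComponentIn_subset S 0 hx₀)
  rw [Homeomorph.image_symm] at h
  simp only [Homeomorph.addRight_symm, Homeomorph.coe_addRight, add_neg_cancel] at h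
  rw [connectedComponentIn_eq hx₀, ← h, image_sub_right]

namespace MvPolynomial

section LinePolynomials

variable {ι R A B : Type*} [CommSemiring R] [CommRing A] [Algebra R A] [CommRing B] [Algebra R B]

noncomputable def linePoly (p : MvPolynomial ι R) (y v : ι → A) : A[X] :=
  aeval (fun i => Polynomial.C (y i) + Polynomial.C (v i) * Polynomial.X) p

/-- `z ↦ (z + c) ^ D * p (y + (z + c)⁻¹ • v)`, where `D` is the total degree of `p`. -/
noncomputable def reflectedLine (p : MvPolynomial ι R) (y v : ι → A) (c : A) : A[X] :=
  (reflect p.totalDegree (p.linePoly y v)).comp (Polynomial.X + Polynomial.C c)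

variable (p : MvPolynomial ι R) (y v : ι → A)

theorem eval_linePoly (t : A) : (p.linePoly y v).eval t = aeval (fun i => y i + t * v i) p := by
  rw [linePoly, aeval_def, polynomial_eval_eval₂, aeval_def]
  congr 1
  · exact RingHom.ext fun r => by
      rw [RingHom.comp_apply, Polynomial.algebraMap_apply, coe_evalRingHom, Polynomial.eval_C]
  · ext i
    simp only [Polynomial.eval_add, Polynomial.eval_C, Polynomial.eval_mul, Polynomial.eval_X]
    ring

theorem coeff_zero_linePoly : (p.linePoly y v).coeff 0 = aeval y p := by
  simp [coeff_zero_eq_eval_zero, eval_linePoly]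

theorem map_linePoly (φ : A →ₐ[R] B) :
    (p.linePoly y v).map (φ : A →+* B) = p.linePoly (φ ∘ y) (φ ∘ v) := by
  rw [linePoly, linePoly, ← Polynomial.coe_mapAlgHom, ← AlgHom.comp_apply, comp_aeval]
  congr 1
  ext i
  simp

theorem natDegree_linePoly_le : (p.linePoly y v).natDegree ≤ p.totalDegree := by
  rw [linePoly, aeval_def, eval₂_eq]
  refine natDegree_sum_le_of_forall_le _ _ fun m hm => natDegree_mul_le.trans ?_
  rw [Polynomial.algebraMap_apply, natDegree_C, zero_add]
  refine (natDegree_prod_le _ _).trans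
    ((Finset.sum_le_sum fun i _ => natDegree_pow_le.trans ?_).trans (le_totalDegree hm))
  have : (Polynomial.C (y i) + Polynomial.C (v i) * Polynomial.X).natDegree ≤ 1 := by
    compute_degree
  simpa using Nat.mul_le_mul_left (m i) this

theorem map_reflectedLine (c : A) (φ : A →ₐ[R] B) :
    (p.reflectedLine y v c).map (φ : A →+* B) = p.reflectedLine (φ ∘ y) (φ ∘ v) (φ c) := by
  simp [reflectedLine, Polynomial.map_comp, ← reflect_map, map_linePoly]

theorem natDegree_reflect_linePoly [IsDomain A] (hy : aeval y p ≠ 0) :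
    (reflect p.totalDegree (p.linePoly y v)).natDegree = p.totalDegree :=
  le_antisymm (natDegree_reflect_le.trans (max_le le_rfl (natDegree_linePoly_le p y v)))
    (le_natDegree_of_ne_zero (by rwa [coeff_reflect, revAt_le le_rfl, Nat.sub_self,
      coeff_zero_linePoly]))

theorem natDegree_reflectedLine [IsDomain A] (c : A) (hy : aeval y p ≠ 0) :
    (p.reflectedLine y v c).natDegree = p.totalDegree := by
  rw [reflectedLine, natDegree_comp, natDegree_reflect_linePoly p y v hy, natDegree_X_add_C,
    mul_one]

theorem leadingCoeff_reflectedLine [IsDomain A] (c : A) (hy : aeval y p ≠ 0) :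
    (p.reflectedLine y v c).leadingCoeff = aeval y p := by
  rw [reflectedLine, leadingCoeff_comp (by rw [natDegree_X_add_C]; exact one_ne_zero),
    leadingCoeff_X_add_C, one_pow, mul_one, leadingCoeff, natDegree_reflect_linePoly p y v hy,
    coeff_reflect, revAt_le le_rfl, Nat.sub_self, coeff_zero_linePoly]

theorem isRoot_reflectedLine_iff {K : Type*} [Field K] [Algebra R K] (y v : ι → K) {c z : K}
    (hz : z + c ≠ 0) :
    (p.reflectedLine y v c).IsRoot z ↔ aeval (fun i => y i + (z + c)⁻¹ * v i) p = 0 := by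
  let := invertibleOfNonzero (inv_ne_zero hz)
  have h := eval₂_reflect_eq_zero_iff (RingHom.id K) (z + c)⁻¹ p.totalDegree (p.linePoly y v)
    (natDegree_linePoly_le p y v)
  rw [invOf_eq_inv, inv_inv, Polynomial.eval₂_id, Polynomial.eval₂_id, eval_linePoly] at h
  rw [reflectedLine, IsRoot.def, eval_comp, Polynomial.eval_add, Polynomial.eval_X,
    Polynomial.eval_C, h]

end LinePolynomials

variable {ι : Type*}

theorem aeval_ofReal (p : MvPolynomial ι ℝ) (x : ι → ℝ) :
    aeval (fun i => (x i : ℂ)) p = (eval x p : ℂ) :=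
  aeval_algebraMap_apply ℂ x p

theorem aeval_aeval_X_add_C {R A : Type*} [CommSemiring R] [CommSemiring A] [Algebra R A]
    (p : MvPolynomial ι R) (c : ι → R) (w : ι → A) :
    aeval w (aeval (fun i => X i + C (c i)) p) =
      aeval (fun i => w i + algebraMap R A (c i)) p := by
  rw [← AlgHom.comp_apply, comp_aeval]
  simp

theorem eval_aeval_X_add_C {R : Type*} [CommSemiring R] (p : MvPolynomial ι R) (c x : ι → R) :
    eval x (aeval (fun i => X i + C (c i)) p) = eval (x + c) p := by
  have h := aeval_aeval_X_add_C p c x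
  simp only [Algebra.algebraMap_self, RingHom.id_apply] at h
  exact h

def IsRealZeroAt (p : MvPolynomial ι ℝ) (y : ι → ℝ) : Prop :=
  eval y p ≠ 0 ∧ ∀ (v : ι → ℝ) (z : ℂ), aeval (fun i => (y i : ℂ) + z * v i) p = 0 → z.im = 0

theorem isRealZero_iff_isRealZeroAt_zero {n : ℕ} (p : MvPolynomial (Fin n) ℝ) :
    IsRealZero p ↔ p.IsRealZeroAt 0 := by
  have hline : ∀ a (z : ℂ), Polynomial.aeval z (lineRestrict p a) = aeval (fun i => a i * z) p :=
    fun a z => by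
      rw [lineRestrict, ← AlgHom.comp_apply, comp_aeval]
      simp
  simp [IsRealZero, IsRealZeroAt, hline, mul_comm]

theorem isRealZeroAt_aeval_X_add_C_iff (p : MvPolynomial ι ℝ) (x₀ y : ι → ℝ) :
    (aeval (fun i => X i + C (x₀ i)) p).IsRealZeroAt y ↔ p.IsRealZeroAt (y + x₀) := by
  have hcomplex : ∀ (v : ι → ℝ) (z : ℂ),
      aeval (fun i => (y i : ℂ) + z * v i) (aeval (fun i => X i + C (x₀ i)) p) =
        aeval (fun i => ((y + x₀) i : ℂ) + z * v i) p := fun v z => by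
    rw [aeval_aeval_X_add_C]
    congr 2
    funext i
    simp only [Pi.add_apply, ofReal_add, Complex.coe_algebraMap]
    ring
  simp only [IsRealZeroAt, eval_aeval_X_add_C, hcomplex]

/-- The pencil `P_σ`, divided by `p y` to make it monic. -/
noncomputable def pencil (p : MvPolynomial ι ℝ) (x y a : ι → ℝ) (σ : ℝ) : ℂ[X] :=
  Polynomial.C (eval y p : ℂ)⁻¹ * p.reflectedLine (fun i => (y i : ℂ))
    (fun i => I * (1 - σ) * (x i - y i) + σ * a i) (I * (1 - σ))

-- The pencil is the specialization at `σ` of one polynomial over `ℂ[σ]`.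
theorem continuous_coeff_pencil (p : MvPolynomial ι ℝ) (x y a : ι → ℝ) (k : ℕ) :
    Continuous fun σ : ℝ => (p.pencil x y a σ).coeff k := by
  let V : ι → ℂ[X] := fun i =>
    Polynomial.C (I * (x i - y i)) * (1 - Polynomial.X) + Polynomial.C (a i : ℂ) * Polynomial.X
  let c : ℂ[X] := Polynomial.C I * (1 - Polynomial.X)
  let G : ℂ[X][X] := p.reflectedLine (fun i => Polynomial.C (y i : ℂ)) V c
  have hG : ∀ σ : ℝ, (p.pencil x y a σ).coeff k = (eval y p : ℂ)⁻¹ * (G.coeff k).eval (σ : ℂ) := by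
    intro σ
    have h := map_reflectedLine p (fun i => Polynomial.C (y i : ℂ)) V c
      ((Polynomial.aeval (σ : ℂ) : ℂ[X] →ₐ[ℂ] ℂ).restrictScalars ℝ)
    rw [pencil, Polynomial.coeff_C_mul]
    congr 1
    rw [← Polynomial.coe_aeval_eq_eval, ← AlgHom.restrictScalars_apply ℝ, ← RingHom.coe_coe,
      ← Polynomial.coeff_map, h]
    congr 2
    · funext i; simp
    · funext i
      simp only [AlgHom.coe_restrictScalars', Polynomial.coe_aeval_eq_eval, Function.comp_apply,
        Polynomial.eval_add, Polynomial.eval_mul, Polynomial.eval_C, Polynomial.eval_sub,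
        Polynomial.eval_one, Polynomial.eval_X, V]
      ring
    · simp [c]
  simp_rw [hG]
  exact continuous_const.mul ((Polynomial.continuous _).comp continuous_ofReal)

section Pencil

variable {p : MvPolynomial ι ℝ} (x : ι → ℝ) {y : ι → ℝ} (a : ι → ℝ) (hy : eval y p ≠ 0)
include hy

theorem monic_pencil (σ : ℝ) : (p.pencil x y a σ).Monic := by
  refine monic_C_mul_of_mul_leadingCoeff_eq_one ?_
  rw [leadingCoeff_reflectedLine _ _ _ _ (by rw [aeval_ofReal]; exact_mod_cast hy), aeval_ofReal,
    inv_mul_cancel₀ (by exact_mod_cast hy)]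

theorem natDegree_pencil (σ : ℝ) : (p.pencil x y a σ).natDegree = p.totalDegree := by
  rw [pencil, natDegree_C_mul (inv_ne_zero (by exact_mod_cast hy)),
    natDegree_reflectedLine _ _ _ _ (by rw [aeval_ofReal]; exact_mod_cast hy)]

theorem pencil_isRoot_iff {σ : ℝ} {z : ℂ} (hz : z + I * (1 - σ) ≠ 0) :
    (p.pencil x y a σ).IsRoot z ↔
      aeval (fun i => (y i : ℂ) + (z + I * (1 - σ))⁻¹ * (I * (1 - σ) * (x i - y i) + σ * a i))
        p = 0 := by
  rw [pencil, IsRoot.def, Polynomial.eval_mul, Polynomial.eval_C,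
    mul_eq_zero_iff_left (inv_ne_zero (by exact_mod_cast hy)), ← IsRoot.def,
    isRoot_reflectedLine_iff p _ _ hz]

theorem pencil_not_isRoot_ofReal (hx : IsRealZeroAt p x) {σ : ℝ} (hσ : σ < 1) (t : ℝ) :
    ¬ (p.pencil x y a σ).IsRoot t := by
  have hw_im : ((t : ℂ) + I * (1 - σ)).im = 1 - σ := by simp
  have hw : (t : ℂ) + I * (1 - σ) ≠ 0 := fun h => by
    rw [h, zero_im] at hw_im; linarith
  rw [pencil_isRoot_iff x a hy hw]
  intro h
  have him := hx.2 (fun i => t * (y i - x i) + σ * a i) ((t : ℂ) + I * (1 - σ))⁻¹ (by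
    rw [← h]; congr 2; funext i; field_simp; push_cast; ring)
  rw [inv_im, hw_im, div_eq_zero_iff, neg_eq_zero, normSq_eq_zero] at him
  exact him.elim (fun h => by linarith) hw

theorem pencil_one_isRoot_inv {t : ℂ} (ht : aeval (fun i => (y i : ℂ) + t * a i) p = 0) :
    (p.pencil x y a 1).IsRoot t⁻¹ := by
  have ht0 : t ≠ 0 := by
    rintro rfl
    apply hy
    simpa [aeval_ofReal] using ht
  rw [pencil_isRoot_iff x a hy (by simpa using ht0)]
  simpa using ht

end Pencil

theorem im_neg_of_isRoot_pencil_zero {p : MvPolynomial ι ℝ} {x y : ι → ℝ} (a : ι → ℝ)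
    (hx : IsRealZeroAt p x) (hseg : segment ℝ x y ⊆ {w | eval w p ≠ 0}) {z : ℂ}
    (hz : (p.pencil x y a 0).IsRoot z) : z.im < 0 := by
  by_contra! hz_im
  have hw : z + I ≠ 0 := fun h => by
    have := congrArg Complex.im h
    simp only [add_im, I_im, zero_im] at this
    linarith
  rw [pencil_isRoot_iff x a (hseg (right_mem_segment ℝ x y)) (by simpa using hw)] at hz
  -- `u` is real by `hx` and lies outside `[0, 1]` by `hseg`; solving `z = u (z + i)` then
  -- gives `Im z < 0`.
  set u := z / (z + I)
  have hxu : aeval (fun i => (x i : ℂ) + u * ((y i - x i : ℝ) : ℂ)) p = 0 := by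
    rw [← hz]; congr 2; funext i
    simp only [u, ofReal_zero, sub_zero, mul_one, zero_mul, add_zero]
    field_simp; push_cast; ring
  have huμ : u = (u.re : ℂ) := Complex.ext rfl (by simp [hx.2 _ u hxu])
  set μ := u.re
  have hzμ : z * (1 - μ) = μ * I := by
    have := huμ
    rw [div_eq_iff hw] at this
    linear_combination this
  have hμ : μ < 0 ∨ 1 < μ := by
    by_contra! hμ
    refine hseg ((segment_eq_image' ℝ x y).symm ▸ mem_image_of_mem _
      (show μ ∈ Icc (0 : ℝ) 1 from ⟨hμ.1, hμ.2⟩)) ?_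
    rw [huμ] at hxu
    have : ((eval (x + μ • (y - x)) p : ℝ) : ℂ) = 0 := by
      rw [← aeval_ofReal, ← hxu]; congr 2; funext i; simp
    exact_mod_cast this
  have him := congrArg Complex.im hzμ
  simp only [mul_im, sub_im, one_im, ofReal_im, sub_self, mul_zero, sub_re, one_re, ofReal_re,
    zero_add, I_im, mul_one, I_re, add_zero] at him
  rcases hμ with hμ | hμ <;> nlinarith

theorem IsRealZeroAt.im_nonneg_of_segment {p : MvPolynomial ι ℝ} {x y : ι → ℝ}
    (hx : p.IsRealZeroAt x) (hseg : segment ℝ x y ⊆ {w | eval w p ≠ 0}) (a : ι → ℝ) {t : ℂ}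
    (ht : aeval (fun i => (y i : ℂ) + t * a i) p = 0) : 0 ≤ t.im := by
  have hy : eval y p ≠ 0 := hseg (right_mem_segment ℝ x y)
  have hmon := monic_pencil x a hy
  have hdeg := natDegree_pencil x a hy
  have hcont := continuous_coeff_pencil p x y a
  have hlower : ∀ σ ∈ Ico (0 : ℝ) 1, ∀ z, (p.pencil x y a σ).IsRoot z →
      z ∈ {z : ℂ | z.im < 0} := by
    refine isPreconnected_Ico.forall_isRoot_mem (V := {z : ℂ | 0 < z.im}) hmon hcont hdeg
      (isOpen_lt continuous_im continuous_const) (isOpen_lt continuous_const continuous_im)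
      (disjoint_left.2 fun z (h1 : z.im < 0) (h2 : 0 < z.im) => lt_asymm h1 h2)
      (fun σ hσ z hz => ?_) (left_mem_Ico.2 one_pos)
      (fun z hz => im_neg_of_isRoot_pencil_zero a hx hseg hz)
    rcases lt_trichotomy z.im 0 with h | h | h
    · exact Or.inl h
    · refine absurd ?_ (pencil_not_isRoot_ofReal x a hy hx hσ.2 z.re)
      rwa [show (z.re : ℂ) = z from Complex.ext rfl (by simp [h])]
    · exact Or.inr h
  have hnonpos : t⁻¹.im ≤ 0 := forall_isRoot_mem_of_mem_closure hmon hcont hdeg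
    (isClosed_le continuous_im continuous_const) (S := Ico 0 1) (C := {z : ℂ | z.im ≤ 0})
    (fun σ hσ z hz => (show z.im < 0 from hlower σ hσ z hz).le)
    (by rw [closure_Ico zero_ne_one]; exact right_mem_Icc.2 zero_le_one) t⁻¹
    (pencil_one_isRoot_inv x a hy ht)
  by_contra! h
  have hpos : 0 < -t.im / normSq t :=
    div_pos (neg_pos.2 h) (normSq_pos.2 fun h0 => by simp [h0] at h)
  rw [inv_im] at hnonpos
  linarith

theorem IsRealZeroAt.of_segment {p : MvPolynomial ι ℝ} {x y : ι → ℝ} (hx : p.IsRealZeroAt x)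
    (hseg : segment ℝ x y ⊆ {w | eval w p ≠ 0}) : p.IsRealZeroAt y :=
  ⟨hseg (right_mem_segment ℝ x y), fun a t ht => le_antisymm
    (by simpa using hx.im_nonneg_of_segment hseg (-a) (t := -t) (by simpa using ht))
    (hx.im_nonneg_of_segment hseg a ht)⟩

end MvPolynomial

/-- Translating a real zero polynomial by a point `x₀` of the connected component
of `0` in its nonvanishing set yields again a real zero polynomial, whose
component of `0` is the translate by `-x₀` of the original component. -/
theorem realZero_translate {n : ℕ} (p : MvPolynomial (Fin n) ℝ) (hp : IsRealZero p)
    (x₀ : Fin n → ℝ)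
    (hx₀ : x₀ ∈ connectedComponentIn {x : Fin n → ℝ | MvPolynomial.eval x p ≠ 0} 0)
    (q : MvPolynomial (Fin n) ℝ)
    (hq : q = MvPolynomial.aeval (fun i => MvPolynomial.X i + MvPolynomial.C (x₀ i)) p) :
    IsRealZero q ∧
      connectedComponentIn {x : Fin n → ℝ | MvPolynomial.eval x q ≠ 0} 0 =
        (fun x => x - x₀) '' connectedComponentIn {x : Fin n → ℝ | MvPolynomial.eval x p ≠ 0} 0 := by
  subst hq
  have hx₀' : p.IsRealZeroAt x₀ :=
    (isOpen_ne_fun (continuous_eval p) continuous_const).induction_on_connectedComponentIn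
      (fun _ _ hseg hx => hx.of_segment hseg) ((isRealZero_iff_isRealZeroAt_zero p).1 hp) hx₀
  refine ⟨(isRealZero_iff_isRealZeroAt_zero _).2
    ((isRealZeroAt_aeval_X_add_C_iff p x₀ 0).2 (by simpa using hx₀')), ?_⟩
  have hS : {x | eval x (aeval (fun i => MvPolynomial.X i + MvPolynomial.C (x₀ i)) p) ≠ 0} =
      (· + x₀) ⁻¹' {x | eval x p ≠ 0} := by
    ext x
    change _ ≠ 0 ↔ _ ≠ 0
    rw [eval_aeval_X_add_C]
  rw [hS, connectedComponentIn_preimage_add_right hx₀]
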